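/- Let g be a word with a(g)=b(g)=0 and let 𝓕 = {(i₁,j₁),…,(i_k,j_k)} be a complete α-folding of g. Then ν(g) = Σ_{l=1}^k b(w(i_l, j_l)), where w(i,j) is the (cyclic) subword strictly between positions i and j and b counts the β-exponent sum. -/

import Mathlib

/-! Common setup: free group on two generators, Heisenberg group of unipotent
upper-triangular 3×3 integer matrices, the Heisenberg invariant. -/

noncomputable section

open scoped commutatorElement

/-- The free group on two generators. -/
abbrev F : Type := FreeGroup Bool

/-- The generator `α` of the free group. -/
def Wα : F := FreeGroup.of false

/-- The generator `β` of the free group. -/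
def Wβ : F := FreeGroup.of true

/-- `F₃`, the third term of the lower central series `F₁ = F`, `F_{n+1} = [F, Fₙ]`
(Mathlib's `lowerCentralSeries` is 0-indexed). -/
abbrev F₃ : Subgroup F := (⊤ : Subgroup F).lowerCentralSeries 2

/-- `H = F/F₃`. -/
abbrev H : Type := F ⧸ F₃

/-- The unipotent upper-triangular matrix `M(a,b,c)`. -/
def Mmat (a b c : ℤ) : Matrix (Fin 3) (Fin 3) ℤ := !![1, a, c; 0, 1, b; 0, 0, 1]

theorem Mmat_mul (a b c a' b' c' : ℤ) :
    Mmat a b c * Mmat a' b' c' = Mmat (a + a') (b + b') (c + c' + a * b') := by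
  simp [Mmat, Matrix.mul_fin_three]; ring_nf <;> simp

theorem Mmat_zero : Mmat 0 0 0 = 1 := by
  simp [Mmat, Matrix.one_fin_three]

/-- `M(a,b,c)` as a unit of the matrix ring. -/
def Munit (a b c : ℤ) : (Matrix (Fin 3) (Fin 3) ℤ)ˣ :=
  ⟨Mmat a b c, Mmat (-a) (-b) (a * b - c),
    by rw [Mmat_mul]; rw [show a + -a = 0 by ring, show b + -b = 0 by ring,
      show c + (a*b - c) + a * (-b) = 0 by ring]; exact Mmat_zero,
    by rw [Mmat_mul]; rw [show -a + a = 0 by ring, show -b + b = 0 by ring,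
      show (a*b - c) + c + (-a) * b = 0 by ring]; exact Mmat_zero⟩

theorem Munit_mul (a b c a' b' c' : ℤ) :
    Munit a b c * Munit a' b' c' = Munit (a + a') (b + b') (c + c' + a * b') :=
  Units.ext (Mmat_mul a b c a' b' c')

theorem Munit_one : Munit 0 0 0 = 1 := Units.ext Mmat_zero

theorem Munit_inv (a b c : ℤ) : (Munit a b c)⁻¹ = Munit (-a) (-b) (a * b - c) :=
  Units.ext rfl

theorem Munit_congr {a b c a' b' c' : ℤ} (h1 : a = a') (h2 : b = b') (h3 : c = c') :
    Munit a b c = Munit a' b' c' := by subst h1; subst h2; subst h3; rfl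

/-- The integer Heisenberg group, as the subgroup of units of the `3×3` integer
matrix ring consisting of the unipotent upper-triangular matrices `M(a,b,c)`. -/
def Heis : Subgroup (Matrix (Fin 3) (Fin 3) ℤ)ˣ where
  carrier := {x | ∃ a b c : ℤ, x = Munit a b c}
  one_mem' := ⟨0, 0, 0, Munit_one.symm⟩
  mul_mem' := by
    rintro x y ⟨a, b, c, rfl⟩ ⟨a', b', c', rfl⟩
    exact ⟨_, _, _, Munit_mul a b c a' b' c'⟩
  inv_mem' := by
    rintro x ⟨a, b, c, rfl⟩
    exact ⟨_, _, _, Munit_inv a b c⟩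

/-- The homomorphism `Ψ : F → ℍ` with `Ψ(α) = M(1,0,0)` and `Ψ(β) = M(0,1,0)`. -/
def Ψ : F →* (Matrix (Fin 3) (Fin 3) ℤ)ˣ :=
  FreeGroup.lift fun x => if x then Munit 0 1 0 else Munit 1 0 0

theorem Ψ_mem (g : F) : Ψ g ∈ Heis := by
  induction g using FreeGroup.induction_on with
  | C1 => exact Heis.one_mem
  | of x => cases x <;> · show Ψ (FreeGroup.of _) ∈ Heis; rw [Ψ, FreeGroup.lift_apply_of]; exact ⟨_, _, _, rfl⟩
  | inv_of x hx => rw [map_inv]; exact Heis.inv_mem hx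
  | mul x y hx hy => rw [map_mul]; exact Heis.mul_mem hx hy

theorem Munit_commutator (a b c a' b' c' : ℤ) :
    ⁅Munit a b c, Munit a' b' c'⁆ = Munit 0 0 (a * b' - a' * b) := by
  rw [commutatorElement_def, Munit_inv, Munit_inv, Munit_mul, Munit_mul, Munit_mul]
  exact Munit_congr (by ring) (by ring) (by ring)

theorem Munit_central (z a b c : ℤ) : Munit 0 0 z * Munit a b c = Munit a b c * Munit 0 0 z := by
  rw [Munit_mul, Munit_mul]; exact Munit_congr (by ring) (by ring) (by ring)

theorem Heis_comm_central (g : F) (hg : g ∈ (⁅(⊤ : Subgroup F), ⊤⁆ : Subgroup F)) :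
    Ψ g ∈ Subgroup.centralizer (Heis : Set (Matrix (Fin 3) (Fin 3) ℤ)ˣ) := by
  have hle : (⁅(⊤ : Subgroup F), ⊤⁆ : Subgroup F) ≤
      Subgroup.comap Ψ (Subgroup.centralizer (Heis : Set (Matrix (Fin 3) (Fin 3) ℤ)ˣ)) := by
    rw [Subgroup.commutator_le]
    intro g₁ _ g₂ _
    rw [Subgroup.mem_comap, map_commutatorElement]
    obtain ⟨a, b, c, h1⟩ := Ψ_mem g₁
    obtain ⟨a', b', c', h2⟩ := Ψ_mem g₂
    rw [h1, h2, Munit_commutator]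
    rw [Subgroup.mem_centralizer_iff]
    rintro x ⟨p, q, r, rfl⟩
    exact (Munit_central _ _ _ _).symm
  exact hle hg

theorem F₃_le_ker : F₃ ≤ Ψ.ker := by
  show ⁅(⁅(⊤ : Subgroup F), ⊤⁆ : Subgroup F), ⊤⁆ ≤ Ψ.ker
  rw [Subgroup.commutator_le]
  intro g hg h _
  rw [MonoidHom.mem_ker, map_commutatorElement]
  have hc : Ψ h * Ψ g = Ψ g * Ψ h :=
    Subgroup.mem_centralizer_iff.mp (Heis_comm_central g hg) (Ψ h) (Ψ_mem h)
  rw [commutatorElement_def, ← hc]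
  group

/-- The induced homomorphism `ψ : H = F/F₃ → ℍ`. -/
def ψH : H →* Heis :=
  QuotientGroup.lift F₃ (Ψ.codRestrict Heis Ψ_mem)
    (fun g hg => by
      have : Ψ g = 1 := F₃_le_ker hg
      exact Subtype.ext (by simpa using this))

/-- The matrix of the image of `g ∈ H` in the Heisenberg group. -/
def mat (g : H) : Matrix (Fin 3) (Fin 3) ℤ := ((ψH g : (Matrix (Fin 3) (Fin 3) ℤ)ˣ) : Matrix (Fin 3) (Fin 3) ℤ)

/-- `a(g)`: the exponent sum of `α` in `g` (the `(0,1)` entry of the Heisenberg matrix). -/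
def aH (g : H) : ℤ := mat g 0 1

/-- `b(g)`: the exponent sum of `β` in `g` (the `(1,2)` entry of the Heisenberg matrix). -/
def bH (g : H) : ℤ := mat g 1 2

/-- The Heisenberg invariant `ν(g)` of `g ∈ H`: the exponent of the central element
`[α,β]` in the unique normal form `g = [α,β]^ν α^a β^b`. -/
def νH (g : H) : ℤ := mat g 0 2 - aH g * bH g

/-- `a(g)` for a word `g` in the free group. -/
def aF (g : F) : ℤ := aH (QuotientGroup.mk g)

/-- `b(g)` for a word `g` in the free group. -/
def bF (g : F) : ℤ := bH (QuotientGroup.mk g)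

/-- The Heisenberg invariant of a word in the free group: the Heisenberg invariant of its
image in `H = F/F₃`. -/
def νF (g : F) : ℤ := νH (QuotientGroup.mk g)

/-! Words in the letters α, α⁻¹, β, β⁻¹ and foldings (RNA secondary structures). -/

/-- A letter is a pair `(x, s)` (the `FreeGroup` convention): `s = true` for a generator,
`s = false` for its inverse. -/
abbrev Letter : Type := Bool × Bool

/-- A word in the letters `α`, `α⁻¹`, `β`, `β⁻¹`. -/
abbrev Word : Type := List Letter

/-- The letter `α`. -/
def lα : Letter := (false, true)
/-- The letter `α⁻¹`. -/
def lαinv : Letter := (false, false)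
/-- The letter `β`. -/
def lβ : Letter := (true, true)
/-- The letter `β⁻¹`. -/
def lβinv : Letter := (true, false)

/-- The exponent sum of `α` in a word: #`α` − #`α⁻¹`. -/
def aw (w : Word) : ℤ := (w.count lα : ℤ) - (w.count lαinv : ℤ)

/-- The exponent sum of `β` in a word: #`β` − #`β⁻¹`. -/
def bw (w : Word) : ℤ := (w.count lβ : ℤ) - (w.count lβinv : ℤ)

/-- The cyclic subword `w(i,j)` strictly between positions `i` and `j` (`0`-indexed),
read counterclockwise: if `i < j` it is `l_{i+1} ⋯ l_{j-1}`, and if `i > j` it is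
`l_{i+1} ⋯ l_n l_1 ⋯ l_{j-1}` (0-indexed: wraps around the end). -/
def between (w : Word) (i j : ℕ) : Word :=
  if i < j then (w.drop (i + 1)).take (j - i - 1) else w.drop (i + 1) ++ w.take j

/-- A folding (RNA secondary structure without pseudo-knots) of the cyclic word `w`:
a collection of disjoint pairs `(i,j)` of positions with `l_i ∈ {α, β}` and `l_j` the
inverse letter, subject to the non-nesting (no pseudo-knot) condition. -/
structure Folding (w : Word) where
  /-- The set of paired positions. -/
  pairs : Finset (Fin w.length × Fin w.length)
  ne : ∀ p ∈ pairs, p.1 ≠ p.2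
  matched : ∀ p ∈ pairs,
    (w.get p.1 = lα ∧ w.get p.2 = lαinv) ∨ (w.get p.1 = lβ ∧ w.get p.2 = lβinv)
  disjoint : ∀ p ∈ pairs, ∀ q ∈ pairs, p ≠ q →
    p.1 ≠ q.1 ∧ p.1 ≠ q.2 ∧ p.2 ≠ q.1 ∧ p.2 ≠ q.2
  nonnested : ∀ p ∈ pairs, ∀ q ∈ pairs,
    (p.1 < q.1 ∧ q.1 < p.2 → p.1 < q.2 ∧ q.2 < p.2) ∧
    (p.2 < q.1 ∧ q.1 < p.1 → p.2 < q.2 ∧ q.2 < p.1)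

/-- A complete `α`-folding: every pair is an `α`-pair and every occurrence of the
letter `α` is paired. -/
def Folding.IsCompleteAlpha {w : Word} (𝓕 : Folding w) : Prop :=
  (∀ p ∈ 𝓕.pairs, w.get p.1 = lα) ∧
    ∀ i : Fin w.length, w.get i = lα → ∃ p ∈ 𝓕.pairs, p.1 = i

/-! Reading `Ψ` letter by letter, `ν(g) = Σ_i a(l_i) b(l_{i+1} ⋯ l_n)` once `a(g) = 0`. Only the
letters `α^{±1}` contribute, and when `b(g) = 0` the suffix sums at the two ends of a pair `(i, j)`
differ by `b(w(i, j))`, cyclic wrap-around included. A complete `α`-folding matches the `α`'s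
bijectively with the `α⁻¹`'s (there are equally many since `a(g) = 0`), so the sum over
positions regroups into the sum over pairs. -/

theorem aw_cons (x : Letter) (t : Word) : aw (x :: t) = aw [x] + aw t := by
  simp only [aw, List.count_cons, List.count_nil]; push_cast; ring

theorem bw_cons (x : Letter) (t : Word) : bw (x :: t) = bw [x] + bw t := by
  simp only [bw, List.count_cons, List.count_nil]; push_cast; ring

theorem bw_append (u v : Word) : bw (u ++ v) = bw u + bw v := by
  simp only [bw, List.count_append]; push_cast; ring

def cw : Word → ℤ
  | [] => 0
  | x :: t => aw [x] * bw t + cw t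

theorem Ψ_mk_singleton (x : Letter) : Ψ (FreeGroup.mk [x]) = Munit (aw [x]) (bw [x]) 0 := by
  obtain ⟨b, _ | _⟩ := x
  · rw [show FreeGroup.mk [(b, false)] = (FreeGroup.of b)⁻¹ from rfl, map_inv, Ψ,
      FreeGroup.lift_apply_of]
    cases b <;> simp only [Bool.false_eq_true, if_false, if_true, Munit_inv] <;>
      exact Munit_congr (by decide) (by decide) (by decide)
  · rw [show FreeGroup.mk [(b, true)] = FreeGroup.of b from rfl, Ψ, FreeGroup.lift_apply_of]
    cases b <;> exact Munit_congr (by decide) (by decide) (by decide)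

theorem Ψ_mk (w : Word) : Ψ (FreeGroup.mk w) = Munit (aw w) (bw w) (cw w) := by
  induction w with
  | nil => exact Munit_one.symm
  | cons x t ih =>
    rw [← show FreeGroup.mk [x] * FreeGroup.mk t = FreeGroup.mk (x :: t) from FreeGroup.mul_mk,
      map_mul, Ψ_mk_singleton, ih, Munit_mul]
    exact Munit_congr (aw_cons x t).symm (bw_cons x t).symm (by rw [cw]; ring)

theorem mat_mk (w : Word) :
    mat (QuotientGroup.mk (FreeGroup.mk w)) = Mmat (aw w) (bw w) (cw w) :=
  congrArg Units.val (Ψ_mk w)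

theorem aF_mk (w : Word) : aF (FreeGroup.mk w) = aw w := by
  rw [aF, aH, mat_mk]; simp [Mmat]

theorem bF_mk (w : Word) : bF (FreeGroup.mk w) = bw w := by
  rw [bF, bH, mat_mk]; simp [Mmat]

theorem νF_mk (w : Word) : νF (FreeGroup.mk w) = cw w - aw w * bw w := by
  rw [νF, νH, aH, bH, mat_mk]; simp [Mmat]

theorem cw_eq_sum (w : Word) :
    cw w = ∑ i : Fin w.length, aw [w.get i] * bw (w.drop (i + 1)) := by
  induction w with
  | nil => rfl
  | cons x t ih =>
    rw [cw, ih]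
    exact (Fin.sum_univ_succ (n := t.length)
      fun i => aw [(x :: t).get i] * bw ((x :: t).drop (i + 1))).symm

theorem aw_singleton_mul (x : Letter) (y : ℤ) :
    aw [x] * y = (if x = lα then y else 0) - (if x = lαinv then y else 0) := by
  obtain ⟨_ | _, _ | _⟩ := x <;> simp [aw, lα, lαinv]

def positions (w : Word) (c : Letter) : Finset (Fin w.length) := {i | w.get i = c}

theorem card_positions (w : Word) (c : Letter) : (positions w c).card = w.count c := by
  convert Fin.card_filter_univ_eq_vector_get_eq_count c ⟨w, rfl⟩ <;> rfl

theorem sum_aw_mul (w : Word) (f : Fin w.length → ℤ) :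
    ∑ i, aw [w.get i] * f i = ∑ i ∈ positions w lα, f i - ∑ i ∈ positions w lαinv, f i := by
  simp only [aw_singleton_mul, Finset.sum_sub_distrib, positions, Finset.sum_filter]

theorem bw_drop_of_get_eq_lαinv {w : Word} {j : Fin w.length} (h : w.get j = lαinv) :
    bw (w.drop j) = bw (w.drop (j + 1)) := by
  rw [List.drop_eq_getElem_cons j.isLt, bw_cons, show w[(j : ℕ)] = w.get j from rfl, h]
  simp [bw, lαinv, lβ, lβinv]

theorem bw_between {w : Word} (hB : bw w = 0) (i j : ℕ) :
    bw (between w i j) = bw (w.drop (i + 1)) - bw (w.drop j) := by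
  unfold between
  split_ifs with hij
  · have hsplit := (List.take_append_drop (j - i - 1) (w.drop (i + 1))).symm
    rw [List.drop_drop, show i + 1 + (j - i - 1) = j by omega] at hsplit
    have h := bw_append ((w.drop (i + 1)).take (j - i - 1)) (w.drop j)
    rw [← hsplit] at h
    linarith
  · have htotal := bw_append (w.take j) (w.drop j)
    rw [List.take_append_drop, hB] at htotal
    rw [bw_append]; linarith

namespace Folding

variable {w : Word} (𝓕 : Folding w)

theorem injOn_fst : Set.InjOn Prod.fst (𝓕.pairs : Set (Fin w.length × Fin w.length)) :=
  fun p hp q hq h => by_contra fun hpq => (𝓕.disjoint p hp q hq hpq).1 h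

theorem injOn_snd : Set.InjOn Prod.snd (𝓕.pairs : Set (Fin w.length × Fin w.length)) :=
  fun p hp q hq h => by_contra fun hpq => (𝓕.disjoint p hp q hq hpq).2.2.2 h

namespace IsCompleteAlpha

variable {𝓕}

theorem get_snd (hc : 𝓕.IsCompleteAlpha) {p : Fin w.length × Fin w.length} (hp : p ∈ 𝓕.pairs) :
    w.get p.2 = lαinv := by
  rcases 𝓕.matched p hp with ⟨_, h⟩ | ⟨h, _⟩
  · exact h
  · exact absurd (hc.1 p hp ▸ h) (by decide)

theorem image_fst (hc : 𝓕.IsCompleteAlpha) : 𝓕.pairs.image Prod.fst = positions w lα := by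
  ext i
  simp only [Finset.mem_image, positions, Finset.mem_filter, Finset.mem_univ, true_and]
  constructor
  · rintro ⟨p, hp, rfl⟩; exact hc.1 p hp
  · exact hc.2 i

theorem image_snd (hc : 𝓕.IsCompleteAlpha) (hA : aw w = 0) :
    𝓕.pairs.image Prod.snd = positions w lαinv := by
  refine Finset.eq_of_subset_of_card_le ?_ ?_
  · intro i hi
    obtain ⟨p, hp, rfl⟩ := Finset.mem_image.1 hi
    simpa [positions] using hc.get_snd hp
  · have hcount : w.count lαinv = w.count lα := by unfold aw at hA; omega
    rw [Finset.card_image_of_injOn 𝓕.injOn_snd, card_positions, hcount, ← card_positions,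
      ← hc.image_fst, Finset.card_image_of_injOn 𝓕.injOn_fst]

theorem sum_sub_sum_eq_sum_pairs (hc : 𝓕.IsCompleteAlpha) (hA : aw w = 0)
    (f g : Fin w.length → ℤ) :
    ∑ i ∈ positions w lα, f i - ∑ j ∈ positions w lαinv, g j = ∑ p ∈ 𝓕.pairs, (f p.1 - g p.2) := by
  rw [← hc.image_fst, ← hc.image_snd hA, Finset.sum_image 𝓕.injOn_fst,
    Finset.sum_image 𝓕.injOn_snd, Finset.sum_sub_distrib]

end IsCompleteAlpha

end Folding

/-- if `g` is a word with `a(g) = b(g) = 0` and `𝓕` is a complete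
`α`-folding of `g`, then `ν(g) = Σ_{(i,j) ∈ 𝓕} b(w(i,j))`, where `w(i,j)` is the cyclic
subword strictly between positions `i` and `j`. -/
theorem statement_18 (w : Word) (ha : aF (FreeGroup.mk w) = 0) (hb : bF (FreeGroup.mk w) = 0)
    (𝓕 : Folding w) (hc : 𝓕.IsCompleteAlpha) :
    νF (FreeGroup.mk w) = ∑ p ∈ 𝓕.pairs, bw (between w (p.1 : ℕ) (p.2 : ℕ)) := by
  have hA : aw w = 0 := aF_mk w ▸ ha
  have hB : bw w = 0 := bF_mk w ▸ hb
  calc νF (FreeGroup.mk w)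
      = ∑ i, aw [w.get i] * bw (w.drop (i + 1)) := by
        rw [νF_mk, hA, zero_mul, sub_zero, cw_eq_sum]
    _ = ∑ i ∈ positions w lα, bw (w.drop (i + 1)) - ∑ j ∈ positions w lαinv, bw (w.drop (j + 1)) :=
        sum_aw_mul w _
    _ = ∑ p ∈ 𝓕.pairs, (bw (w.drop (p.1 + 1)) - bw (w.drop (p.2 + 1))) :=
        hc.sum_sub_sum_eq_sum_pairs hA _ _
    _ = ∑ p ∈ 𝓕.pairs, bw (between w (p.1 : ℕ) (p.2 : ℕ)) :=
        Finset.sum_congr rfl fun p hp => by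
          rw [bw_between hB, bw_drop_of_get_eq_lαinv (hc.get_snd hp)]

end
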